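/- The function h_2^I(t) = −√(κΦ)(ζe^{γ(T−t)}+e^{−γ(T−t)})/(ζe^{γ(T−t)}−e^{−γ(T−t)}) is monotonically nonincreasing in t on [0,T] when ζ > 1 and γ, κ, Φ > 0. -/

import Mathlib

/-!
Multiplying numerator and denominator by `exp u`, with `u = γ (T - t) ≥ 0`, turns the ratio in
`h t` into `(x + 1) / (x - 1) = 1 + 2 / (x - 1)` with `x = ζ exp (2u) > 1`. This is decreasing
in `x`, while `x` decreases as `t` increases, so the ratio increases in `t`; the factor
`-√(κΦ) ≤ 0` reverses this.
-/

open Real Set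

theorem antitoneOn_add_one_div_sub_one :
    AntitoneOn (fun x : ℝ => (x + 1) / (x - 1)) (Ioi 1) := by
  intro x hx y hy hxy
  rw [mem_Ioi] at hx hy
  rw [div_le_div_iff₀ (by linarith) (by linarith)]
  nlinarith

theorem mul_exp_add_exp_neg_div_mul_exp_sub_exp_neg (ζ u : ℝ) :
    (ζ * exp u + exp (-u)) / (ζ * exp u - exp (-u)) =
      (ζ * exp (2 * u) + 1) / (ζ * exp (2 * u) - 1) := by
  have hexp2 : exp (2 * u) = exp u * exp u := by rw [← exp_add]; ring_nf
  have hexp_neg : exp (-u) * exp u = 1 := by rw [← exp_add, neg_add_cancel, exp_zero]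
  rw [← mul_div_mul_right _ _ (exp_pos u).ne', add_mul, sub_mul, hexp_neg, hexp2, mul_assoc]

theorem antitoneOn_mul_exp_add_exp_neg_div {ζ : ℝ} (hζ : 1 < ζ) :
    AntitoneOn (fun u => (ζ * exp u + exp (-u)) / (ζ * exp u - exp (-u))) (Ici 0) := by
  have hmaps : MapsTo (fun u => ζ * exp (2 * u)) (Ici 0) (Ioi 1) := fun u hu =>
    one_lt_mul_of_lt_of_le hζ (one_le_exp (by linarith [mem_Ici.1 hu]))
  have hmono : MonotoneOn (fun u => ζ * exp (2 * u)) (Ici 0) := fun u _ v _ huv => by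
    dsimp only; gcongr
  simpa only [mul_exp_add_exp_neg_div_mul_exp_sub_exp_neg, Function.comp_def] using
    antitoneOn_add_one_div_sub_one.comp_MonotoneOn hmono hmaps

theorem stmt_9_general (T κ Φ γ ζ : ℝ) (hγ : 0 < γ) (hζ : 1 < ζ)
    (h : ℝ → ℝ)
    (hdef : ∀ t, h t = -Real.sqrt (κ * Φ) *
      (ζ * Real.exp (γ * (T - t)) + Real.exp (-γ * (T - t))) /
      (ζ * Real.exp (γ * (T - t)) - Real.exp (-γ * (T - t)))) :
    AntitoneOn h (Set.Icc 0 T) := by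
  have htime : AntitoneOn (fun t => γ * (T - t)) (Icc 0 T) := fun s _ t _ hst => by
    dsimp only; gcongr
  have hmaps : MapsTo (fun t => γ * (T - t)) (Icc 0 T) (Ici 0) := fun t ht =>
    mul_nonneg hγ.le (sub_nonneg.2 ht.2)
  have hratio := (antitoneOn_mul_exp_add_exp_neg_div hζ).comp htime hmaps
  have hscaled := (antitone_mul_left (neg_nonpos.2 (sqrt_nonneg (κ * Φ)))).comp_monotoneOn hratio
  convert hscaled using 1
  funext t
  rw [hdef, mul_div_assoc, neg_mul γ]; rfl

theorem stmt_9 (T κ Φ γ ζ : ℝ) (hκ : 0 < κ) (hΦ : 0 < Φ) (hγ : 0 < γ) (hζ : 1 < ζ)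
    (h : ℝ → ℝ)
    (hdef : ∀ t, h t = -Real.sqrt (κ * Φ) *
      (ζ * Real.exp (γ * (T - t)) + Real.exp (-γ * (T - t))) /
      (ζ * Real.exp (γ * (T - t)) - Real.exp (-γ * (T - t)))) :
    AntitoneOn h (Set.Icc 0 T) :=
  stmt_9_general T κ Φ γ ζ hγ hζ h hdef
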